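/- arXiv:2307.14887 — 2 statements merged into one kernel-verified Lean document; each statement's English description precedes it below -/
import Mathlib

section
/- (General representation lemma for convex even functions dominating the absolute value.) Let ψ : ℝ → ℝ be convex, even (ψ(−x) = ψ(x) for all x), satisfy ψ(x) ≥ |x| for all x ∈ ℝ, and lim_{x→∞} (ψ(x) − x) = 0. Then there exists a probability measure μ on [0,∞) such that ψ(y) = ∫_{[0,∞)} max(|y|, z) dμ(z) for all y ∈ ℝ. -/
open MeasureTheory Filter

section Statement5Aux
open Set

namespace Statement5Aux

noncomputable def rd (ψ : ℝ → ℝ) (x : ℝ) : ℝ := sInf (slope ψ x '' Set.Ioi x)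

lemma mem_ds {a b : ℝ} (h : a ≠ b) : a ∈ Set.univ \ {b} :=
  ⟨mem_univ _, by simpa using h⟩

variable {ψ : ℝ → ℝ}

lemma slope_tendsto (hlim : Tendsto (fun x => ψ x - x) atTop (nhds 0)) (x : ℝ) :
    Tendsto (fun T => slope ψ x T) atTop (nhds 1) := by
  have h1 : Tendsto (fun T => ((ψ T - T) - (ψ x - x)) / (T - x) + 1) atTop (nhds 1) := by
    have h2 : Tendsto (fun T => ((ψ T - T) - (ψ x - x)) / (T - x)) atTop (nhds 0) := by
      exact Tendsto.div_atTop (hlim.sub_const _)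
        (tendsto_atTop_add_const_right _ _ tendsto_id)
    simpa using h2.add_const 1
  apply h1.congr'
  filter_upwards [eventually_gt_atTop x] with T hT
  have hTx : T - x ≠ 0 := sub_ne_zero.2 hT.ne'
  rw [slope_def_field]
  field_simp
  ring

lemma slope_le_one (hconv : ConvexOn ℝ Set.univ ψ)
    (hlim : Tendsto (fun x => ψ x - x) atTop (nhds 0)) {x y : ℝ} (h : x < y) :
    slope ψ x y ≤ 1 := by
  apply ge_of_tendsto (slope_tendsto hlim x)
  filter_upwards [eventually_ge_atTop y] with T hT
  exact hconv.slope_mono (mem_univ x) (mem_ds h.ne')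
    (mem_ds ((h.trans_le hT).ne')) hT

lemma psi0_min (hconv : ConvexOn ℝ Set.univ ψ) (heven : ∀ x, ψ (-x) = ψ x) (x : ℝ) :
    ψ 0 ≤ ψ x := by
  have h := hconv.2 (mem_univ x) (mem_univ (-x)) (by norm_num : (0:ℝ) ≤ 1/2)
    (by norm_num : (0:ℝ) ≤ 1/2) (by norm_num)
  simp only [smul_eq_mul, heven] at h
  have : (1/2 : ℝ) * x + (1/2) * (-x) = 0 := by ring
  rw [this] at h
  linarith

lemma slope_nonneg (hconv : ConvexOn ℝ Set.univ ψ) (heven : ∀ x, ψ (-x) = ψ x)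
    {x y : ℝ} (hx : 0 ≤ x) (hxy : x < y) : 0 ≤ slope ψ x y := by
  rcases hx.eq_or_lt with rfl | hx0
  · rw [slope_def_field]
    apply div_nonneg (by linarith [psi0_min hconv heven y]) (by linarith)
  · have h1 : slope ψ x 0 ≤ slope ψ x y :=
      hconv.slope_mono (mem_univ x) (mem_ds hx0.ne)
        (mem_ds hxy.ne') (by linarith)
    refine le_trans ?_ h1
    rw [slope_def_field]
    rw [div_nonneg_iff]
    exact Or.inr ⟨by linarith [psi0_min hconv heven x], by linarith⟩

lemma bddBelow_slopes (hconv : ConvexOn ℝ Set.univ ψ) (x : ℝ) :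
    BddBelow (slope ψ x '' Set.Ioi x) := by
  refine ⟨slope ψ x (x - 1), ?_⟩
  rintro _ ⟨z, hz, rfl⟩
  exact hconv.slope_mono (mem_univ x) (mem_ds (by simp))
    (mem_ds ((mem_Ioi.1 hz).ne')) (by linarith [mem_Ioi.1 hz])

lemma rd_le_slope (hconv : ConvexOn ℝ Set.univ ψ) {x z : ℝ} (hz : x < z) :
    rd ψ x ≤ slope ψ x z :=
  csInf_le (bddBelow_slopes hconv x) (mem_image_of_mem _ hz)

lemma slope_le_rd (hconv : ConvexOn ℝ Set.univ ψ) {w x : ℝ} (hw : w < x) :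
    slope ψ x w ≤ rd ψ x := by
  apply le_csInf (⟨_, mem_image_of_mem _ (lt_add_one x)⟩)
  rintro _ ⟨z, hz, rfl⟩
  exact hconv.slope_mono (mem_univ x) (mem_ds hw.ne)
    (mem_ds ((mem_Ioi.1 hz).ne')) (by linarith [mem_Ioi.1 hz])

lemma rd_hasDeriv (hconv : ConvexOn ℝ Set.univ ψ) (x : ℝ) :
    HasDerivWithinAt ψ (rd ψ x) (Set.Ioi x) x := by
  rw [hasDerivWithinAt_iff_tendsto_slope' (by simp : x ∉ Set.Ioi x)]
  exact MonotoneOn.tendsto_nhdsGT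
    ((hconv.slope_mono (mem_univ x)).mono (fun z hz => mem_ds ((mem_Ioi.1 hz).ne')))
    (bddBelow_slopes hconv x)

lemma rd_mono (hconv : ConvexOn ℝ Set.univ ψ) : Monotone (rd ψ) := by
  intro x y hxy
  rcases hxy.eq_or_lt with rfl | h
  · exact le_rfl
  · calc rd ψ x ≤ slope ψ x y := rd_le_slope hconv h
      _ = slope ψ y x := slope_comm ψ x y
      _ ≤ rd ψ y := slope_le_rd hconv h

lemma rd_le_one (hconv : ConvexOn ℝ Set.univ ψ)
    (hlim : Tendsto (fun x => ψ x - x) atTop (nhds 0)) (x : ℝ) : rd ψ x ≤ 1 :=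
  le_trans (rd_le_slope hconv (lt_add_one x)) (slope_le_one hconv hlim (lt_add_one x))

lemma rd_nonneg (hconv : ConvexOn ℝ Set.univ ψ) (heven : ∀ x, ψ (-x) = ψ x)
    {x : ℝ} (hx : 0 ≤ x) : 0 ≤ rd ψ x := by
  apply le_csInf (⟨_, mem_image_of_mem _ (lt_add_one x)⟩)
  rintro _ ⟨z, hz, rfl⟩
  exact slope_nonneg hconv heven hx (mem_Ioi.1 hz)

lemma rd_tendsto (hconv : ConvexOn ℝ Set.univ ψ)
    (hlim : Tendsto (fun x => ψ x - x) atTop (nhds 0)) :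
    Tendsto (rd ψ) atTop (nhds 1) := by
  apply tendsto_of_tendsto_of_tendsto_of_le_of_le' (slope_tendsto hlim 0)
    (tendsto_const_nhds : Tendsto (fun _ : ℝ => (1:ℝ)) atTop _)
  · filter_upwards [eventually_gt_atTop 0] with x hx
    rw [slope_comm]
    exact slope_le_rd hconv hx
  · filter_upwards with x
    exact rd_le_one hconv hlim x

end Statement5Aux

end Statement5Aux

section
open Set Statement5Aux Function

/-- General representation lemma for convex even functions dominating the absolute value:
if `ψ : ℝ → ℝ` is convex, even, satisfies `ψ(x) ≥ |x|`, and `ψ(x) − x → 0` as `x → ∞`,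
then there is a probability measure `μ` supported on `[0,∞)` with
`ψ(y) = ∫ max(|y|, z) dμ(z)` for all `y`. -/
theorem statement_5 (ψ : ℝ → ℝ)
    (hconv : ConvexOn ℝ Set.univ ψ)
    (heven : ∀ x, ψ (-x) = ψ x)
    (hdom : ∀ x, |x| ≤ ψ x)
    (hlim : Tendsto (fun x => ψ x - x) atTop (nhds 0)) :
    ∃ μ : Measure ℝ, IsProbabilityMeasure μ ∧ μ (Set.Iio 0) = 0 ∧
      ∀ y : ℝ, ψ y = ∫ z, max |y| z ∂μ := by
  classical
  set f : ℝ → ℝ := Statement5Aux.rd ψ with hfdef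
  have hfmono : Monotone f := rd_mono hconv
  have hfone : ∀ x, f x ≤ 1 := rd_le_one hconv hlim
  have hfnn : ∀ x : ℝ, 0 ≤ x → 0 ≤ f x := fun x hx => rd_nonneg hconv heven hx
  set F : ℝ → ℝ := fun x => if x < 0 then 0 else f x with hFdef
  have hFmono : Monotone F := by
    intro a b hab
    by_cases hb : b < 0
    · simp only [F, if_pos hb, if_pos (lt_of_le_of_lt hab hb)]; exact le_rfl
    · by_cases ha : a < 0
      · simp only [F, if_pos ha, if_neg hb]; exact hfnn b (not_lt.1 hb)
      · simp only [F, if_neg ha, if_neg hb]; exact hfmono hab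
  have hF_le_one : ∀ x, F x ≤ 1 := by
    intro x; by_cases hx : x < 0
    · simp only [F, if_pos hx]; norm_num
    · simp only [F, if_neg hx]; exact hfone x
  have hF_nonneg : ∀ x, 0 ≤ F x := by
    intro x; by_cases hx : x < 0
    · simp only [F, if_pos hx]; exact le_rfl
    · simp only [F, if_neg hx]; exact hfnn x (not_lt.1 hx)
  set S := hFmono.stieltjesFunction with hSdef
  have hS : ∀ x, S x = rightLim F x := fun x => hFmono.stieltjesFunction_eq x
  have hS_neg : ∀ x : ℝ, x < 0 → S x = 0 := by
    intro x hx
    rw [hS]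
    apply rightLim_eq_of_tendsto
    apply Tendsto.congr' _ (tendsto_const_nhds : Tendsto (fun _ : ℝ => (0:ℝ)) _ _)
    filter_upwards [Ioo_mem_nhdsGT hx] with t ht
    simp only [F, if_pos ht.2]
  have hS_eq : ∀ x : ℝ, 0 ≤ x → S x = rightLim f x := by
    intro x hx
    rw [hS]
    apply rightLim_eq_of_tendsto
    apply Tendsto.congr' _ (hfmono.tendsto_rightLim x)
    filter_upwards [self_mem_nhdsWithin] with t ht
    simp only [F, if_neg (not_lt.2 (hx.trans (le_of_lt ht)))]
  have hS_nonneg : ∀ x, 0 ≤ S x := by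
    intro x
    rw [hS]
    exact (hF_nonneg x).trans (hFmono.le_rightLim le_rfl)
  have hS_le_one : ∀ x, S x ≤ 1 := by
    intro x
    rw [hS]
    exact (hFmono.rightLim_le (lt_add_one x)).trans (hF_le_one _)
  have hf_le_S : ∀ x : ℝ, 0 ≤ x → f x ≤ S x := by
    intro x hx
    rw [hS_eq x hx]
    exact hfmono.le_rightLim le_rfl
  have h_bot : Tendsto (⇑S) atBot (nhds 0) := by
    apply Tendsto.congr' _ (tendsto_const_nhds : Tendsto (fun _ : ℝ => (0:ℝ)) _ _)
    filter_upwards [eventually_lt_atBot 0] with x hx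
    exact (hS_neg x hx).symm
  have h_top : Tendsto (⇑S) atTop (nhds 1) := by
    apply tendsto_of_tendsto_of_tendsto_of_le_of_le' (rd_tendsto hconv hlim)
      (tendsto_const_nhds : Tendsto (fun _ : ℝ => (1:ℝ)) atTop _)
    · filter_upwards [eventually_ge_atTop 0] with x hx using hf_le_S x hx
    · filter_upwards with x using hS_le_one x
  set μ := S.measure with hμdef
  have hprob : IsProbabilityMeasure μ := S.isProbabilityMeasure h_bot h_top
  have hIic : ∀ x : ℝ, μ (Set.Iic x) = ENNReal.ofReal (S x) := by
    intro x
    rw [hμdef, S.measure_Iic h_bot, sub_zero]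
  refine ⟨μ, hprob, ?_, ?_⟩
  · have : Set.Iio (0:ℝ) = ⋃ n : ℕ, Set.Iic (-(1 / (n + 1 : ℝ))) := by
      ext x
      simp only [mem_Iio, mem_iUnion, mem_Iic]
      constructor
      · intro hx
        obtain ⟨n, hn⟩ := exists_nat_one_div_lt (show (0:ℝ) < -x by linarith)
        exact ⟨n, by push_cast at hn ⊢; linarith⟩
      · intro ⟨n, hn⟩
        have : (0:ℝ) < 1 / (n + 1 : ℝ) := by positivity
        linarith
    rw [this]
    apply measure_iUnion_null
    intro n
    rw [hIic, hS_neg]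
    · simp
    · have : (0:ℝ) < 1 / (n + 1 : ℝ) := by positivity
      linarith
  intro y
  haveI := hprob
  set b := |y| with hbdef
  have hb0 : (0:ℝ) ≤ b := abs_nonneg y
  have hψy : ψ y = ψ b := by
    rcases abs_cases y with ⟨h1, _⟩ | ⟨h1, _⟩
    · rw [hbdef, h1]
    · rw [hbdef, h1, heven]
  have hpsi_ge : ∀ t : ℝ, t ≤ ψ t := fun t => (le_abs_self t).trans (hdom t)
  have hFTC : ∀ a c : ℝ, a ≤ c → ∫ x in a..c, f x = ψ c - ψ a := by
    intro a c hac
    exact intervalIntegral.integral_eq_sub_of_hasDeriv_right_of_le hac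
      ((hconv.continuousOn isOpen_univ).mono (subset_univ _))
      (fun x _ => rd_hasDeriv hconv x)
      hfmono.intervalIntegrable
  have hScont : ∀ x : ℝ, 0 ≤ x → ContinuousAt f x → S x = f x := by
    intro x hx hcont
    rw [hS_eq x hx]
    exact rightLim_eq_of_tendsto
      (hcont.tendsto.mono_left nhdsWithin_le_nhds)
  have hae : ∀ᵐ x : ℝ, ContinuousAt f x := by
    rw [ae_iff]
    apply measure_mono_null (fun x hx => hx)
      ((hfmono.countable_not_continuousAt).measure_zero _)
  have hintS : ∀ a c : ℝ, 0 ≤ a → a ≤ c → ∫ x in a..c, S x = ψ c - ψ a := by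
    intro a c ha hac
    rw [← hFTC a c hac]
    apply intervalIntegral.integral_congr_ae
    filter_upwards [hae] with x hx hxI
    rw [Set.uIoc_of_le hac] at hxI
    exact hScont x (ha.trans (le_of_lt hxI.1)) hx
  set g : ℝ → ℝ := fun t => 1 - S t with hgdef
  have hg_nonneg : ∀ t, 0 ≤ g t := fun t => sub_nonneg.2 (hS_le_one t)
  have hg_anti : Antitone (fun t => g (b + t)) := by
    intro u v huv
    exact sub_le_sub_left (S.mono (by linarith)) 1
  have hivp : ∀ T : ℝ, 0 ≤ T →
      ∫ t in (0:ℝ)..T, g (b + t) = (ψ b - b) - (ψ (b + T) - (b + T)) := by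
    intro T hT
    have h1 : ∫ t in (0:ℝ)..T, g (b + t) = ∫ x in b..(b + T), g x := by
      simpa using intervalIntegral.integral_comp_add_left (a := 0) (b := T) g b
    have h2 : ∫ x in b..(b + T), g x = (b + T - b) - ∫ x in b..(b + T), S x := by
      rw [hgdef]
      rw [intervalIntegral.integral_sub intervalIntegrable_const S.mono.intervalIntegrable]
      simp
    rw [h1, h2, hintS b (b + T) hb0 (by linarith)]
    ring
  have hgi : ∀ i : ℝ, IntegrableOn (fun t => g (b + t)) (Set.Ioc 0 i) :=
    fun i => (hg_anti.intervalIntegrable).1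
  have hInt : IntegrableOn (fun t => g (b + t)) (Set.Ioi (0:ℝ)) := by
    apply integrableOn_Ioi_of_intervalIntegral_norm_bounded (ψ b - b) 0 hgi tendsto_id
    filter_upwards [eventually_ge_atTop (0:ℝ)] with i hi
    have hn : ∫ t in (0:ℝ)..i, ‖g (b + t)‖ = ∫ t in (0:ℝ)..i, g (b + t) := by
      apply intervalIntegral.integral_congr
      intro x _
      exact Real.norm_of_nonneg (hg_nonneg _)
    rw [hn, hivp i hi]
    linarith [hpsi_ge (b + i)]
  have hval : ∫ t in Set.Ioi (0:ℝ), g (b + t) = ψ b - b := by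
    refine tendsto_nhds_unique (intervalIntegral_tendsto_integral_Ioi 0 hInt tendsto_id) ?_
    have h3 : Tendsto (fun T : ℝ => (ψ b - b) - (ψ (b + T) - (b + T))) atTop
        (nhds ((ψ b - b) - 0)) := by
      apply Tendsto.sub tendsto_const_nhds
      exact hlim.comp (tendsto_atTop_add_const_left _ b tendsto_id)
    rw [sub_zero] at h3
    apply Tendsto.congr' _ h3
    filter_upwards [eventually_ge_atTop (0:ℝ)] with T hT
    exact (hivp T hT).symm
  have hIoi : ∀ s : ℝ, μ (Set.Ioi s) = ENNReal.ofReal (g s) := by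
    intro s
    rw [← Set.compl_Iic, measure_compl measurableSet_Iic (measure_ne_top μ _), hIic,
      measure_univ, hgdef]
    rw [ENNReal.ofReal_sub _ (hS_nonneg s), ENNReal.ofReal_one]
  have hmeas_h : Measurable (fun z : ℝ => max (z - b) 0) :=
    (measurable_id.sub_const b).max measurable_const
  have hset : ∀ t : ℝ, t ∈ Set.Ioi (0:ℝ) → {z : ℝ | t < max (z - b) 0} = Set.Ioi (b + t) := by
    intro t ht
    ext z
    simp only [mem_setOf_eq, mem_Ioi, lt_max_iff]
    rw [mem_Ioi] at ht
    constructor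
    · rintro (hz | hz)
      · linarith
      · linarith
    · intro hz
      left
      linarith
  have hInth : Integrable (fun z : ℝ => max (z - b) 0) μ := by
    have hnn : 0 ≤ᵐ[μ] fun z : ℝ => max (z - b) 0 := ae_of_all _ fun z => le_max_right _ _
    refine ⟨hmeas_h.aestronglyMeasurable, ?_⟩
    rw [hasFiniteIntegral_iff_ofReal hnn]
    rw [lintegral_eq_lintegral_meas_lt μ hnn hmeas_h.aemeasurable]
    have he : ∀ᵐ t ∂(volume.restrict (Set.Ioi (0:ℝ))),
        μ {a : ℝ | t < max (a - b) 0} = ENNReal.ofReal (g (b + t)) := by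
      filter_upwards [ae_restrict_mem measurableSet_Ioi] with t ht
      rw [hset t ht, hIoi]
    rw [lintegral_congr_ae he,
      ← ofReal_integral_eq_lintegral_ofReal hInt (ae_of_all _ (fun t => hg_nonneg _))]
    exact ENNReal.ofReal_lt_top
  have hIh : ∫ z, max (z - b) 0 ∂μ = ψ b - b := by
    have hnn : 0 ≤ᵐ[μ] fun z : ℝ => max (z - b) 0 := ae_of_all _ fun z => le_max_right _ _
    rw [hInth.integral_eq_integral_meas_lt hnn]
    have he : ∀ t ∈ Set.Ioi (0:ℝ), μ.real {a : ℝ | t < max (a - b) 0} = g (b + t) := by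
      intro t ht
      rw [measureReal_def, hset t ht, hIoi, ENNReal.toReal_ofReal (hg_nonneg _)]
    rw [setIntegral_congr_fun measurableSet_Ioi he]
    exact hval
  have hmax : (fun z : ℝ => max b z) = fun z => b + max (z - b) 0 := by
    funext z
    rcases le_total z b with h | h
    · rw [max_eq_left h, max_eq_right (by linarith), add_zero]
    · rw [max_eq_right h, max_eq_left (by linarith)]
      ring
  rw [hψy, hmax]
  rw [integral_add (integrable_const b) hInth, hIh, integral_const]
  simp


end
end

section
/- (Asymptotic linearity of the value functions.) For every k ∈ {0, 1, …, N} and every s ∈ (0,∞)ᵈ, lim_{x→∞} (V_k(x, s) − x) = 0. -/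
open MeasureTheory ProbabilityTheory Real Filter

noncomputable section

/-- The standard normal cumulative distribution function `Φ`. -/
def stdNormalCDF (x : ℝ) : ℝ := ((gaussianReal 0 1) (Set.Iic x)).toReal

/-- The law of `d` i.i.d. standard normal random variables. -/
def stdGaussianPi (d : ℕ) : Measure (Fin d → ℝ) := Measure.pi fun _ => gaussianReal 0 1

/-- Next-period (discounted) prices in the uncorrelated Black-Scholes market:
given current prices `s`, volatilities `σ`, time increment `Δt` and Gaussian noise `ω`,
the next price of asset `i` is `sⁱ · exp(−(σⁱ)²Δt/2 + σⁱ√Δt · ωⁱ)`. -/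
def nextPrice (d : ℕ) (σ : Fin d → ℝ) (Δt : ℝ) (s ω : Fin d → ℝ) : Fin d → ℝ :=
  fun i => s i * Real.exp (-(σ i) ^ 2 * Δt / 2 + σ i * Real.sqrt Δt * ω i)

/-- The coefficient `±1` of a signed unit-vector action in `◇ = {±e_i}`:
an action is a pair `(i, b) : Fin d × Bool`, representing `e_i` if `b` and `−e_i` otherwise. -/
def actionCoeff (b : Bool) : ℝ := if b then 1 else -1

/-- `passportValue d σ Δt N m x s` is the value function `V_{N−m}(x, s)` of the discrete-time
passport option pricing problem, defined backward in time by `V_N(x,s) = |x|` and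
`V_k(x,s) = max_{q ∈ ◇} E[V_{k+1}(x + Σ_j qʲ(Sʲ − sʲ), S)]`, where `S` is the vector of
next-period prices given current prices `s` and the step from `k` to `k+1` uses the
time increment `Δt (k+1)`. Here `m` is the number of remaining steps. -/
def passportValue (d : ℕ) (σ : Fin d → ℝ) (Δt : ℕ → ℝ) (N : ℕ) : ℕ → ℝ → (Fin d → ℝ) → ℝ
  | 0 => fun x _ => |x|
  | (m + 1) => fun x s =>
      ⨆ a : Fin d × Bool,
        ∫ ω, passportValue d σ Δt N m
            (x + actionCoeff a.2 * (nextPrice d σ (Δt (N - m)) s ω a.1 - s a.1))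
            (nextPrice d σ (Δt (N - m)) s ω) ∂(stdGaussianPi d)

/-! ### Auxiliary material -/

section Gaussian

lemma pdf_mul_exp (t x : ℝ) : (gaussianPDFReal 0 1 x).toNNReal • rexp (t * x)
    = (Real.sqrt (2 * Real.pi))⁻¹ * rexp (t ^ 2 / 2) * rexp (-(1/2) * (x - t) ^ 2) := by
  rw [NNReal.smul_def, Real.coe_toNNReal _ (gaussianPDFReal_nonneg 0 1 x)]
  unfold gaussianPDFReal
  rw [smul_eq_mul, mul_assoc, mul_assoc, ← Real.exp_add]
  rw [mul_assoc, ← Real.exp_add]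
  norm_num
  left
  ring

lemma integrable_exp_gaussian (t : ℝ) : Integrable (fun x => rexp (t * x)) (gaussianReal 0 1) := by
  rw [gaussianReal_of_var_ne_zero 0 one_ne_zero]
  have hm : Measurable fun x : ℝ => (gaussianPDFReal 0 1 x).toNNReal :=
    (measurable_gaussianPDFReal 0 1).real_toNNReal
  have hpdf : gaussianPDF 0 1 = fun x => ((gaussianPDFReal 0 1 x).toNNReal : ENNReal) := rfl
  rw [hpdf, integrable_withDensity_iff_integrable_smul hm]
  simp_rw [pdf_mul_exp]
  exact ((integrable_exp_neg_mul_sq (by norm_num : (0:ℝ) < 1/2)).comp_sub_right t).const_mul _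

lemma integral_exp_gaussian (t : ℝ) :
    ∫ x, rexp (t * x) ∂(gaussianReal 0 1) = rexp (t ^ 2 / 2) := by
  rw [gaussianReal_of_var_ne_zero 0 one_ne_zero]
  have hm : Measurable fun x : ℝ => (gaussianPDFReal 0 1 x).toNNReal :=
    (measurable_gaussianPDFReal 0 1).real_toNNReal
  have hpdf : gaussianPDF 0 1 = fun x => ((gaussianPDFReal 0 1 x).toNNReal : ENNReal) := rfl
  rw [hpdf, integral_withDensity_eq_integral_smul hm]
  simp_rw [pdf_mul_exp]
  rw [integral_const_mul, integral_sub_right_eq_self (fun x => rexp (-(1/2) * x ^ 2)) t]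
  rw [integral_gaussian]
  rw [mul_comm, ← mul_assoc, ← Real.sqrt_inv, ← Real.sqrt_mul (by positivity)]
  have : π / (1/2) * ((2:ℝ) * π)⁻¹ = 1 := by field_simp
  rw [this, Real.sqrt_one, one_mul]

instance (d : ℕ) : IsProbabilityMeasure (stdGaussianPi d) := by
  unfold stdGaussianPi; infer_instance

lemma stdGaussianPi_map_eval (d : ℕ) (i : Fin d) :
    (stdGaussianPi d).map (fun ω => ω i) = gaussianReal 0 1 := by
  refine Measure.ext fun s hs => ?_
  rw [Measure.map_apply (measurable_pi_apply i) hs]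
  have hpre : (fun ω : Fin d → ℝ => ω i) ⁻¹' s
      = Set.pi Set.univ (Function.update (fun _ : Fin d => (Set.univ : Set ℝ)) i s) := by
    ext ω
    simp only [Set.mem_preimage, Set.mem_univ_pi]
    constructor
    · intro h j
      rcases eq_or_ne j i with rfl | hj
      · simpa using h
      · simp [Function.update_of_ne hj]
    · intro h
      have := h i
      simpa using this
  rw [hpre, stdGaussianPi, Measure.pi_pi]
  rw [Finset.prod_eq_single i (fun j _ hj => by simp [Function.update_of_ne hj]) (by simp)]
  simp

lemma integrable_exp_eval (d : ℕ) (t : ℝ) (i : Fin d) :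
    Integrable (fun ω => rexp (t * ω i)) (stdGaussianPi d) := by
  have hc : Continuous fun x : ℝ => rexp (t * x) :=
    Real.continuous_exp.comp (continuous_const.mul continuous_id)
  have h := integrable_exp_gaussian t
  rw [← stdGaussianPi_map_eval d i] at h
  exact (integrable_map_measure hc.aestronglyMeasurable
    (measurable_pi_apply i).aemeasurable).mp h

lemma integral_exp_eval (d : ℕ) (t : ℝ) (i : Fin d) :
    ∫ ω, rexp (t * ω i) ∂(stdGaussianPi d) = rexp (t ^ 2 / 2) := by
  have hc : Continuous fun x : ℝ => rexp (t * x) :=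
    Real.continuous_exp.comp (continuous_const.mul continuous_id)
  rw [← integral_exp_gaussian t, ← stdGaussianPi_map_eval d i,
    integral_map (measurable_pi_apply i).aemeasurable hc.aestronglyMeasurable]

end Gaussian

section NP
variable {d : ℕ} (σ : Fin d → ℝ) (Δ : ℝ) (s : Fin d → ℝ)

lemma measurable_nextPrice_comp {α : Type*} [MeasurableSpace α] {S W : α → Fin d → ℝ}
    (hS : Measurable S) (hW : Measurable W) :
    Measurable fun a => nextPrice d σ Δ (S a) (W a) := by
  unfold nextPrice
  exact measurable_pi_lambda _ fun i =>
    ((measurable_pi_apply i).comp hS).mul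
      (Real.measurable_exp.comp
        (measurable_const.add (((measurable_pi_apply i).comp hW).const_mul _)))

lemma integrable_nextPrice (i : Fin d) :
    Integrable (fun ω => nextPrice d σ Δ s ω i) (stdGaussianPi d) := by
  have h := (integrable_exp_eval d (σ i * Real.sqrt Δ) i).const_mul
    (s i * rexp (-(σ i) ^ 2 * Δ / 2))
  refine h.congr (Filter.Eventually.of_forall fun ω => ?_)
  show s i * rexp (-(σ i) ^ 2 * Δ / 2) * rexp (σ i * Real.sqrt Δ * ω i) = nextPrice d σ Δ s ω i
  rw [nextPrice, Real.exp_add, ← mul_assoc]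

lemma integral_nextPrice (hΔ : 0 ≤ Δ) (i : Fin d) :
    ∫ ω, nextPrice d σ Δ s ω i ∂(stdGaussianPi d) = s i := by
  have heq : (fun ω : Fin d → ℝ => nextPrice d σ Δ s ω i)
      = fun ω => (s i * rexp (-(σ i) ^ 2 * Δ / 2)) * rexp (σ i * Real.sqrt Δ * ω i) := by
    funext ω
    rw [nextPrice, Real.exp_add, ← mul_assoc]
  rw [heq, integral_const_mul, integral_exp_eval]
  rw [mul_pow, Real.sq_sqrt hΔ, mul_assoc, ← Real.exp_add]
  have : -(σ i) ^ 2 * Δ / 2 + (σ i) ^ 2 * Δ / 2 = 0 := by ring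
  rw [this, Real.exp_zero, mul_one]

lemma abs_nextPrice (ω : Fin d → ℝ) (i : Fin d) :
    |nextPrice d σ Δ s ω i| = nextPrice d σ Δ (fun j => |s j|) ω i := by
  simp [nextPrice, abs_mul, abs_of_pos (Real.exp_pos _)]

lemma integrable_abs_nextPrice (i : Fin d) :
    Integrable (fun ω => |nextPrice d σ Δ s ω i|) (stdGaussianPi d) :=
  (integrable_nextPrice σ Δ s i).abs

lemma integral_abs_nextPrice (hΔ : 0 ≤ Δ) (i : Fin d) :
    ∫ ω, |nextPrice d σ Δ s ω i| ∂(stdGaussianPi d) = |s i| := by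
  simp_rw [abs_nextPrice]
  exact integral_nextPrice σ Δ _ hΔ i

lemma integrable_linS (A B : ℝ) :
    Integrable (fun ω => A + B * ∑ j, |nextPrice d σ Δ s ω j|) (stdGaussianPi d) :=
  (integrable_const A).add
    ((integrable_finset_sum _ fun j _ => integrable_abs_nextPrice σ Δ s j).const_mul B)

lemma integral_linS (hΔ : 0 ≤ Δ) (A B : ℝ) :
    ∫ ω, (A + B * ∑ j, |nextPrice d σ Δ s ω j|) ∂(stdGaussianPi d)
      = A + B * ∑ j, |s j| := by
  rw [integral_add (integrable_const A)
    ((integrable_finset_sum _ fun j _ => integrable_abs_nextPrice σ Δ s j).const_mul B),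
    integral_const, integral_const_mul,
    integral_finset_sum _ fun j _ => integrable_abs_nextPrice σ Δ s j]
  simp [integral_abs_nextPrice σ Δ s hΔ]

end NP

lemma abs_actionCoeff (b : Bool) : |actionCoeff b| = 1 := by
  cases b <;> simp [actionCoeff]

/-- Total absolute price increment over one step. -/
def totInc (d : ℕ) (σ : Fin d → ℝ) (Δ : ℝ) (s ω : Fin d → ℝ) : ℝ :=
  ∑ j, |nextPrice d σ Δ s ω j - s j|

section TI
variable {d : ℕ} (σ : Fin d → ℝ) (Δ : ℝ) (s : Fin d → ℝ)

lemma totInc_nonneg (ω : Fin d → ℝ) : 0 ≤ totInc d σ Δ s ω :=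
  Finset.sum_nonneg fun j _ => abs_nonneg _

lemma totInc_le (ω : Fin d → ℝ) :
    totInc d σ Δ s ω ≤ ∑ j, (|nextPrice d σ Δ s ω j| + |s j|) :=
  Finset.sum_le_sum fun j _ => abs_sub _ _

lemma measurable_totInc_comp {α : Type*} [MeasurableSpace α] {S W : α → Fin d → ℝ}
    (hS : Measurable S) (hW : Measurable W) :
    Measurable fun a => totInc d σ Δ (S a) (W a) := by
  unfold totInc
  exact Finset.measurable_sum _ fun j _ =>
    (((measurable_pi_apply j).comp (measurable_nextPrice_comp σ Δ hS hW)).sub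
      ((measurable_pi_apply j).comp hS)).abs

lemma abs_sub_totInc_le (x : ℝ) (ω : Fin d → ℝ) :
    |x - totInc d σ Δ s ω| ≤ |x| + ∑ j, (|nextPrice d σ Δ s ω j| + |s j|) := by
  calc |x - totInc d σ Δ s ω| ≤ |x| + |totInc d σ Δ s ω| := abs_sub _ _
    _ = |x| + totInc d σ Δ s ω := by rw [abs_of_nonneg (totInc_nonneg σ Δ s ω)]
    _ ≤ _ := by have := totInc_le σ Δ s ω; linarith

lemma abs_addX_le (x : ℝ) (b : Bool) (i : Fin d) (ω : Fin d → ℝ) :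
    |x + actionCoeff b * (nextPrice d σ Δ s ω i - s i)|
      ≤ |x| + ∑ j, (|nextPrice d σ Δ s ω j| + |s j|) := by
  have h1 : |actionCoeff b * (nextPrice d σ Δ s ω i - s i)| = |nextPrice d σ Δ s ω i - s i| := by
    rw [abs_mul, abs_actionCoeff, one_mul]
  calc |x + actionCoeff b * (nextPrice d σ Δ s ω i - s i)|
      ≤ |x| + |actionCoeff b * (nextPrice d σ Δ s ω i - s i)| := abs_add_le _ _
    _ = |x| + |nextPrice d σ Δ s ω i - s i| := by rw [h1]
    _ ≤ |x| + (|nextPrice d σ Δ s ω i| + |s i|) := by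
        have := abs_sub (nextPrice d σ Δ s ω i) (s i); linarith
    _ ≤ _ := by
        refine add_le_add_right ?_ _
        exact Finset.single_le_sum (f := fun j => |nextPrice d σ Δ s ω j| + |s j|)
          (fun j _ => by positivity) (Finset.mem_univ i)

lemma addX_ge (x : ℝ) (b : Bool) (i : Fin d) (ω : Fin d → ℝ) :
    x - totInc d σ Δ s ω ≤ x + actionCoeff b * (nextPrice d σ Δ s ω i - s i) := by
  have h1 : |actionCoeff b * (nextPrice d σ Δ s ω i - s i)| = |nextPrice d σ Δ s ω i - s i| := by
    rw [abs_mul, abs_actionCoeff, one_mul]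
  have h2 : -(|nextPrice d σ Δ s ω i - s i|) ≤ actionCoeff b * (nextPrice d σ Δ s ω i - s i) := by
    rw [← h1]; exact neg_abs_le _
  have h3 : |nextPrice d σ Δ s ω i - s i| ≤ totInc d σ Δ s ω :=
    Finset.single_le_sum (f := fun j => |nextPrice d σ Δ s ω j - s j|)
      (fun j _ => abs_nonneg _) (Finset.mem_univ i)
  linarith

end TI

/-- Upper bound function for `passportValue x s − x`. -/
def Ubd (d : ℕ) (σ : Fin d → ℝ) (Δt : ℕ → ℝ) (N : ℕ) : ℕ → ℝ → (Fin d → ℝ) → ℝ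
  | 0 => fun x _ => |x| - x
  | (m + 1) => fun x s =>
      ∫ ω, Ubd d σ Δt N m (x - totInc d σ (Δt (N - m)) s ω)
        (nextPrice d σ (Δt (N - m)) s ω) ∂(stdGaussianPi d)

section Main
variable {d : ℕ} (σ : Fin d → ℝ) (Δt : ℕ → ℝ) (N : ℕ)

lemma sm_passport : ∀ m, StronglyMeasurable (Function.uncurry (passportValue d σ Δt N m)) := by
  intro m
  induction m with
  | zero =>
    exact (continuous_abs.comp continuous_fst).stronglyMeasurable
  | succ m ih =>
    have key : ∀ a : Fin d × Bool, StronglyMeasurable fun p : ℝ × (Fin d → ℝ) =>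
        ∫ ω, passportValue d σ Δt N m
          (p.1 + actionCoeff a.2 * (nextPrice d σ (Δt (N - m)) p.2 ω a.1 - p.2 a.1))
          (nextPrice d σ (Δt (N - m)) p.2 ω) ∂(stdGaussianPi d) := by
      intro a
      apply StronglyMeasurable.integral_prod_right'
        (f := fun q : (ℝ × (Fin d → ℝ)) × (Fin d → ℝ) => passportValue d σ Δt N m
          (q.1.1 + actionCoeff a.2 * (nextPrice d σ (Δt (N - m)) q.1.2 q.2 a.1 - q.1.2 a.1))
          (nextPrice d σ (Δt (N - m)) q.1.2 q.2))
      have hN : Measurable fun q : (ℝ × (Fin d → ℝ)) × (Fin d → ℝ) =>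
          nextPrice d σ (Δt (N - m)) q.1.2 q.2 :=
        measurable_nextPrice_comp σ _ (measurable_snd.comp measurable_fst) measurable_snd
      exact ih.comp_measurable
        (((measurable_fst.comp measurable_fst).add
          ((((measurable_pi_apply a.1).comp hN).sub
            ((measurable_pi_apply a.1).comp (measurable_snd.comp measurable_fst))).const_mul
              _)).prodMk hN)
    exact (Measurable.iSup fun a => (key a).measurable).stronglyMeasurable

lemma sm_ubd : ∀ m, StronglyMeasurable (Function.uncurry (Ubd d σ Δt N m)) := by
  intro m
  induction m with
  | zero =>
    exact ((continuous_abs.comp continuous_fst).sub continuous_fst).stronglyMeasurable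
  | succ m ih =>
    apply StronglyMeasurable.integral_prod_right'
      (f := fun q : (ℝ × (Fin d → ℝ)) × (Fin d → ℝ) => Ubd d σ Δt N m
        (q.1.1 - totInc d σ (Δt (N - m)) q.1.2 q.2)
        (nextPrice d σ (Δt (N - m)) q.1.2 q.2))
    have hN : Measurable fun q : (ℝ × (Fin d → ℝ)) × (Fin d → ℝ) =>
        nextPrice d σ (Δt (N - m)) q.1.2 q.2 :=
      measurable_nextPrice_comp σ _ (measurable_snd.comp measurable_fst) measurable_snd
    have hT : Measurable fun q : (ℝ × (Fin d → ℝ)) × (Fin d → ℝ) =>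
        totInc d σ (Δt (N - m)) q.1.2 q.2 :=
      measurable_totInc_comp σ _ (measurable_snd.comp measurable_fst) measurable_snd
    exact ih.comp_measurable
      (((measurable_fst.comp measurable_fst).sub hT).prodMk hN)

lemma integrable_master {F : ℝ → (Fin d → ℝ) → ℝ} (hF : StronglyMeasurable (Function.uncurry F))
    {C : ℝ} (hFb : ∀ x s, |F x s| ≤ 2 * |x| + C * ∑ i, |s i|)
    {X : (Fin d → ℝ) → ℝ} (hXm : Measurable X) (x : ℝ) (Δ : ℝ) (s : Fin d → ℝ)
    (hXb : ∀ ω, |X ω| ≤ |x| + ∑ i, (|nextPrice d σ Δ s ω i| + |s i|)) :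
    Integrable (fun ω => F (X ω) (nextPrice d σ Δ s ω)) (stdGaussianPi d) := by
  have hS : Measurable fun ω : Fin d → ℝ => nextPrice d σ Δ s ω :=
    measurable_nextPrice_comp σ _ measurable_const measurable_id
  have hmeas : AEStronglyMeasurable (fun ω => F (X ω) (nextPrice d σ Δ s ω)) (stdGaussianPi d) :=
    (hF.comp_measurable (hXm.prodMk hS)).aestronglyMeasurable
  refine (integrable_linS σ Δ s (2 * |x| + 2 * ∑ i, |s i|) (2 + C)).mono' hmeas ?_
  refine Filter.Eventually.of_forall fun ω => ?_
  have h1 := hFb (X ω) (nextPrice d σ Δ s ω)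
  have h2 := hXb ω
  have h3 : ∑ i, (|nextPrice d σ Δ s ω i| + |s i|)
      = (∑ i, |nextPrice d σ Δ s ω i|) + ∑ i, |s i| := Finset.sum_add_distrib
  have h4 : (2 + C) * ∑ i, |nextPrice d σ Δ s ω i|
      = 2 * (∑ i, |nextPrice d σ Δ s ω i|) + C * ∑ i, |nextPrice d σ Δ s ω i| := by ring
  rw [Real.norm_eq_abs]
  linarith

lemma passport_nonneg : ∀ m x s, 0 ≤ passportValue d σ Δt N m x s := by
  intro m
  induction m with
  | zero => intro x s; exact abs_nonneg x
  | succ m ih =>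
    intro x s
    exact Real.iSup_nonneg fun a => integral_nonneg fun ω => ih _ _

lemma ubd_nonneg : ∀ m x s, 0 ≤ Ubd d σ Δt N m x s := by
  intro m
  induction m with
  | zero => intro x s; simp [Ubd]; exact le_abs_self x
  | succ m ih =>
    intro x s
    exact integral_nonneg fun ω => ih _ _

lemma passport_bound (hd : 0 < d) (hΔt : ∀ n, 0 < Δt n) :
    ∀ m x s, |passportValue d σ Δt N m x s| ≤ 2 * |x| + (4 * m) * ∑ i, |s i| := by
  intro m
  induction m with
  | zero =>
    intro x s
    have : (0:ℝ) ≤ ∑ i, |s i| := Finset.sum_nonneg fun i _ => abs_nonneg _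
    simp only [passportValue, abs_abs, Nat.cast_zero]
    nlinarith [abs_nonneg x]
  | succ m ih =>
    intro x s
    haveI : Nonempty (Fin d × Bool) := ⟨(⟨0, hd⟩, true)⟩
    rw [abs_of_nonneg (passport_nonneg σ Δt N _ x s)]
    set Δ := Δt (N - m) with hΔdef
    have hΔ : (0:ℝ) ≤ Δ := (hΔt _).le
    show (⨆ a : Fin d × Bool, ∫ ω, passportValue d σ Δt N m
        (x + actionCoeff a.2 * (nextPrice d σ Δ s ω a.1 - s a.1))
        (nextPrice d σ Δ s ω) ∂(stdGaussianPi d)) ≤ _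
    refine ciSup_le fun a => ?_
    have hXm : Measurable fun ω : Fin d → ℝ =>
        x + actionCoeff a.2 * (nextPrice d σ Δ s ω a.1 - s a.1) :=
      measurable_const.add
        ((((measurable_pi_apply a.1).comp
          (measurable_nextPrice_comp σ Δ measurable_const measurable_id)).sub
            measurable_const).const_mul _)
    have hib : ∀ x' s', |passportValue d σ Δt N m x' s'| ≤ 2 * |x'| + (4 * m) * ∑ i, |s' i| :=
      fun x' s' => ih x' s'
    have hint : Integrable (fun ω => passportValue d σ Δt N m
        (x + actionCoeff a.2 * (nextPrice d σ Δ s ω a.1 - s a.1))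
        (nextPrice d σ Δ s ω)) (stdGaussianPi d) :=
      integrable_master σ (sm_passport σ Δt N m) hib hXm x Δ s
        (fun ω => abs_addX_le σ Δ s x a.2 a.1 ω)
    have hmono : ∀ ω, passportValue d σ Δt N m
        (x + actionCoeff a.2 * (nextPrice d σ Δ s ω a.1 - s a.1)) (nextPrice d σ Δ s ω)
        ≤ (2 * |x| + 2 * |s a.1|) + ((4 * m) + 2) * ∑ j, |nextPrice d σ Δ s ω j| := by
      intro ω
      have h1 := le_of_abs_le (hib (x + actionCoeff a.2 * (nextPrice d σ Δ s ω a.1 - s a.1))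
        (nextPrice d σ Δ s ω))
      have h2 : |x + actionCoeff a.2 * (nextPrice d σ Δ s ω a.1 - s a.1)|
          ≤ |x| + (|nextPrice d σ Δ s ω a.1| + |s a.1|) := by
        have hq : |actionCoeff a.2 * (nextPrice d σ Δ s ω a.1 - s a.1)|
            = |nextPrice d σ Δ s ω a.1 - s a.1| := by
          rw [abs_mul, abs_actionCoeff, one_mul]
        have := abs_add_le x (actionCoeff a.2 * (nextPrice d σ Δ s ω a.1 - s a.1))
        have := abs_sub (nextPrice d σ Δ s ω a.1) (s a.1)
        linarith [abs_add_le x (actionCoeff a.2 * (nextPrice d σ Δ s ω a.1 - s a.1)),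
          abs_sub (nextPrice d σ Δ s ω a.1) (s a.1), hq.le, hq.ge]
      have h3 : |nextPrice d σ Δ s ω a.1| ≤ ∑ j, |nextPrice d σ Δ s ω j| :=
        Finset.single_le_sum (f := fun j => |nextPrice d σ Δ s ω j|)
          (fun j _ => abs_nonneg _) (Finset.mem_univ a.1)
      nlinarith
    calc ∫ ω, passportValue d σ Δt N m
          (x + actionCoeff a.2 * (nextPrice d σ Δ s ω a.1 - s a.1))
          (nextPrice d σ Δ s ω) ∂(stdGaussianPi d)
        ≤ ∫ ω, ((2 * |x| + 2 * |s a.1|) + ((4 * m) + 2) * ∑ j, |nextPrice d σ Δ s ω j|)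
            ∂(stdGaussianPi d) :=
          integral_mono hint (integrable_linS σ Δ s _ _) hmono
      _ = (2 * |x| + 2 * |s a.1|) + ((4 * m) + 2) * ∑ j, |s j| := integral_linS σ Δ s hΔ _ _
      _ ≤ 2 * |x| + (4 * (m + 1 : ℕ)) * ∑ i, |s i| := by
          have h4 : |s a.1| ≤ ∑ j, |s j| :=
            Finset.single_le_sum (f := fun j => |s j|) (fun j _ => abs_nonneg _)
              (Finset.mem_univ a.1)
          have h5 : (0:ℝ) ≤ ∑ j, |s j| := Finset.sum_nonneg fun j _ => abs_nonneg _
          push_cast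
          nlinarith

lemma ubd_bound (hΔt : ∀ n, 0 < Δt n) :
    ∀ m x s, |Ubd d σ Δt N m x s| ≤ 2 * |x| + (4 * m) * ∑ i, |s i| := by
  intro m
  induction m with
  | zero =>
    intro x s
    have h5 : (0:ℝ) ≤ ∑ i, |s i| := Finset.sum_nonneg fun i _ => abs_nonneg _
    have : |Ubd d σ Δt N 0 x s| = |x| - x := abs_of_nonneg (ubd_nonneg σ Δt N 0 x s)
    rw [this]
    have := abs_nonneg x
    have := neg_abs_le x
    simp only [Nat.cast_zero]
    nlinarith
  | succ m ih =>
    intro x s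
    rw [abs_of_nonneg (ubd_nonneg σ Δt N _ x s)]
    set Δ := Δt (N - m) with hΔdef
    have hΔ : (0:ℝ) ≤ Δ := (hΔt _).le
    have hXm : Measurable fun ω : Fin d → ℝ => x - totInc d σ Δ s ω :=
      measurable_const.sub (measurable_totInc_comp σ Δ measurable_const measurable_id)
    have hint : Integrable (fun ω => Ubd d σ Δt N m (x - totInc d σ Δ s ω)
        (nextPrice d σ Δ s ω)) (stdGaussianPi d) :=
      integrable_master σ (sm_ubd σ Δt N m) ih hXm x Δ s
        (fun ω => abs_sub_totInc_le σ Δ s x ω)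
    have hmono : ∀ ω, Ubd d σ Δt N m (x - totInc d σ Δ s ω) (nextPrice d σ Δ s ω)
        ≤ (2 * |x| + 2 * ∑ i, |s i|) + ((4 * m) + 2) * ∑ j, |nextPrice d σ Δ s ω j| := by
      intro ω
      have h1 := le_of_abs_le (ih (x - totInc d σ Δ s ω) (nextPrice d σ Δ s ω))
      have h2 := abs_sub_totInc_le σ Δ s x ω
      have h3 : ∑ i, (|nextPrice d σ Δ s ω i| + |s i|)
          = (∑ i, |nextPrice d σ Δ s ω i|) + ∑ i, |s i| := Finset.sum_add_distrib
      nlinarith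
    show (∫ ω, Ubd d σ Δt N m (x - totInc d σ Δ s ω)
        (nextPrice d σ Δ s ω) ∂(stdGaussianPi d)) ≤ _
    calc (∫ ω, Ubd d σ Δt N m (x - totInc d σ Δ s ω)
          (nextPrice d σ Δ s ω) ∂(stdGaussianPi d))
        ≤ ∫ ω, ((2 * |x| + 2 * ∑ i, |s i|) + ((4 * m) + 2) * ∑ j, |nextPrice d σ Δ s ω j|)
            ∂(stdGaussianPi d) :=
          integral_mono hint (integrable_linS σ Δ s _ _) hmono
      _ = (2 * |x| + 2 * ∑ i, |s i|) + ((4 * m) + 2) * ∑ j, |s j| := integral_linS σ Δ s hΔ _ _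
      _ ≤ 2 * |x| + (4 * (m + 1 : ℕ)) * ∑ i, |s i| := by
          have h5 : (0:ℝ) ≤ ∑ j, |s j| := Finset.sum_nonneg fun j _ => abs_nonneg _
          push_cast
          nlinarith

lemma ubd_anti (hΔt : ∀ n, 0 < Δt n) :
    ∀ m (s : Fin d → ℝ) ⦃x y : ℝ⦄, x ≤ y → Ubd d σ Δt N m y s ≤ Ubd d σ Δt N m x s := by
  intro m
  induction m with
  | zero =>
    intro s x y hxy
    show |y| - y ≤ |x| - x
    rcases abs_cases x with ⟨hx, _⟩ | ⟨hx, _⟩ <;> rcases abs_cases y with ⟨hy, _⟩ | ⟨hy, _⟩ <;>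
      linarith
  | succ m ih =>
    intro s x y hxy
    set Δ := Δt (N - m) with hΔdef
    have hXmx : Measurable fun ω : Fin d → ℝ => x - totInc d σ Δ s ω :=
      measurable_const.sub (measurable_totInc_comp σ Δ measurable_const measurable_id)
    have hXmy : Measurable fun ω : Fin d → ℝ => y - totInc d σ Δ s ω :=
      measurable_const.sub (measurable_totInc_comp σ Δ measurable_const measurable_id)
    have hintx : Integrable (fun ω => Ubd d σ Δt N m (x - totInc d σ Δ s ω)
        (nextPrice d σ Δ s ω)) (stdGaussianPi d) :=
      integrable_master σ (sm_ubd σ Δt N m) (ubd_bound σ Δt N hΔt m) hXmx x Δ s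
        (fun ω => abs_sub_totInc_le σ Δ s x ω)
    have hinty : Integrable (fun ω => Ubd d σ Δt N m (y - totInc d σ Δ s ω)
        (nextPrice d σ Δ s ω)) (stdGaussianPi d) :=
      integrable_master σ (sm_ubd σ Δt N m) (ubd_bound σ Δt N hΔt m) hXmy y Δ s
        (fun ω => abs_sub_totInc_le σ Δ s y ω)
    exact integral_mono hinty hintx fun ω => ih _ (by linarith)

lemma passport_lower (hd : 0 < d) (hΔt : ∀ n, 0 < Δt n) :
    ∀ m x s, x ≤ passportValue d σ Δt N m x s := by
  intro m
  induction m with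
  | zero => intro x s; exact le_abs_self x
  | succ m ih =>
    intro x s
    set Δ := Δt (N - m) with hΔdef
    have hΔ : (0:ℝ) ≤ Δ := (hΔt _).le
    set a₀ : Fin d × Bool := (⟨0, hd⟩, true) with ha₀
    have hXm : Measurable fun ω : Fin d → ℝ =>
        x + actionCoeff a₀.2 * (nextPrice d σ Δ s ω a₀.1 - s a₀.1) :=
      measurable_const.add
        ((((measurable_pi_apply a₀.1).comp
          (measurable_nextPrice_comp σ Δ measurable_const measurable_id)).sub
            measurable_const).const_mul _)
    have hint2 : Integrable (fun ω : Fin d → ℝ =>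
        actionCoeff a₀.2 * (nextPrice d σ Δ s ω a₀.1 - s a₀.1)) (stdGaussianPi d) :=
      ((integrable_nextPrice σ Δ s a₀.1).sub (integrable_const _)).const_mul _
    have hintX : Integrable (fun ω : Fin d → ℝ =>
        x + actionCoeff a₀.2 * (nextPrice d σ Δ s ω a₀.1 - s a₀.1)) (stdGaussianPi d) :=
      (integrable_const x).add hint2
    have hintP : Integrable (fun ω => passportValue d σ Δt N m
        (x + actionCoeff a₀.2 * (nextPrice d σ Δ s ω a₀.1 - s a₀.1))
        (nextPrice d σ Δ s ω)) (stdGaussianPi d) :=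
      integrable_master σ (sm_passport σ Δt N m) (passport_bound σ Δt N hd hΔt m) hXm x Δ s
        (fun ω => abs_addX_le σ Δ s x a₀.2 a₀.1 ω)
    have hX : (∫ ω, (x + actionCoeff a₀.2 * (nextPrice d σ Δ s ω a₀.1 - s a₀.1))
        ∂(stdGaussianPi d)) = x := by
      rw [integral_add (integrable_const x) hint2,
        integral_const, integral_const_mul,
        integral_sub (integrable_nextPrice σ Δ s a₀.1) (integrable_const (s a₀.1)),
        integral_nextPrice σ Δ s hΔ, integral_const]
      simp
    have hstep : x ≤ ∫ ω, passportValue d σ Δt N m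
        (x + actionCoeff a₀.2 * (nextPrice d σ Δ s ω a₀.1 - s a₀.1))
        (nextPrice d σ Δ s ω) ∂(stdGaussianPi d) :=
      hX.symm.trans_le (integral_mono hintX hintP fun ω => ih _ _)
    refine hstep.trans ?_
    exact le_ciSup (f := fun a : Fin d × Bool => ∫ ω, passportValue d σ Δt N m
        (x + actionCoeff a.2 * (nextPrice d σ Δ s ω a.1 - s a.1))
        (nextPrice d σ Δ s ω) ∂(stdGaussianPi d))
      (Set.Finite.bddAbove (Set.finite_range _)) a₀

lemma passport_upper (hd : 0 < d) (hΔt : ∀ n, 0 < Δt n) :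
    ∀ m x s, passportValue d σ Δt N m x s ≤ x + Ubd d σ Δt N m x s := by
  intro m
  induction m with
  | zero =>
    intro x s
    show |x| ≤ x + (|x| - x)
    linarith [le_refl |x|]
  | succ m ih =>
    intro x s
    haveI : Nonempty (Fin d × Bool) := ⟨(⟨0, hd⟩, true)⟩
    set Δ := Δt (N - m) with hΔdef
    have hΔ : (0:ℝ) ≤ Δ := (hΔt _).le
    show (⨆ a : Fin d × Bool, ∫ ω, passportValue d σ Δt N m
        (x + actionCoeff a.2 * (nextPrice d σ Δ s ω a.1 - s a.1))
        (nextPrice d σ Δ s ω) ∂(stdGaussianPi d)) ≤ _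
    refine ciSup_le fun a => ?_
    have hXm : Measurable fun ω : Fin d → ℝ =>
        x + actionCoeff a.2 * (nextPrice d σ Δ s ω a.1 - s a.1) :=
      measurable_const.add
        ((((measurable_pi_apply a.1).comp
          (measurable_nextPrice_comp σ Δ measurable_const measurable_id)).sub
            measurable_const).const_mul _)
    have hXmx : Measurable fun ω : Fin d → ℝ => x - totInc d σ Δ s ω :=
      measurable_const.sub (measurable_totInc_comp σ Δ measurable_const measurable_id)
    have hint2 : Integrable (fun ω : Fin d → ℝ =>
        actionCoeff a.2 * (nextPrice d σ Δ s ω a.1 - s a.1)) (stdGaussianPi d) :=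
      ((integrable_nextPrice σ Δ s a.1).sub (integrable_const _)).const_mul _
    have hintX : Integrable (fun ω : Fin d → ℝ =>
        x + actionCoeff a.2 * (nextPrice d σ Δ s ω a.1 - s a.1)) (stdGaussianPi d) :=
      (integrable_const x).add hint2
    have hintP : Integrable (fun ω => passportValue d σ Δt N m
        (x + actionCoeff a.2 * (nextPrice d σ Δ s ω a.1 - s a.1))
        (nextPrice d σ Δ s ω)) (stdGaussianPi d) :=
      integrable_master σ (sm_passport σ Δt N m) (passport_bound σ Δt N hd hΔt m) hXm x Δ s
        (fun ω => abs_addX_le σ Δ s x a.2 a.1 ω)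
    have hintUX : Integrable (fun ω => Ubd d σ Δt N m
        (x + actionCoeff a.2 * (nextPrice d σ Δ s ω a.1 - s a.1))
        (nextPrice d σ Δ s ω)) (stdGaussianPi d) :=
      integrable_master σ (sm_ubd σ Δt N m) (ubd_bound σ Δt N hΔt m) hXm x Δ s
        (fun ω => abs_addX_le σ Δ s x a.2 a.1 ω)
    have hintUt : Integrable (fun ω => Ubd d σ Δt N m (x - totInc d σ Δ s ω)
        (nextPrice d σ Δ s ω)) (stdGaussianPi d) :=
      integrable_master σ (sm_ubd σ Δt N m) (ubd_bound σ Δt N hΔt m) hXmx x Δ s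
        (fun ω => abs_sub_totInc_le σ Δ s x ω)
    have hX : (∫ ω, (x + actionCoeff a.2 * (nextPrice d σ Δ s ω a.1 - s a.1))
        ∂(stdGaussianPi d)) = x := by
      rw [integral_add (integrable_const x) hint2,
        integral_const, integral_const_mul,
        integral_sub (integrable_nextPrice σ Δ s a.1) (integrable_const (s a.1)),
        integral_nextPrice σ Δ s hΔ, integral_const]
      simp
    calc (∫ ω, passportValue d σ Δt N m
          (x + actionCoeff a.2 * (nextPrice d σ Δ s ω a.1 - s a.1))
          (nextPrice d σ Δ s ω) ∂(stdGaussianPi d))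
        ≤ ∫ ω, ((x + actionCoeff a.2 * (nextPrice d σ Δ s ω a.1 - s a.1))
            + Ubd d σ Δt N m (x + actionCoeff a.2 * (nextPrice d σ Δ s ω a.1 - s a.1))
              (nextPrice d σ Δ s ω)) ∂(stdGaussianPi d) :=
          integral_mono hintP (hintX.add hintUX) fun ω => ih _ _
      _ = x + ∫ ω, Ubd d σ Δt N m
            (x + actionCoeff a.2 * (nextPrice d σ Δ s ω a.1 - s a.1))
            (nextPrice d σ Δ s ω) ∂(stdGaussianPi d) := by
          rw [integral_add hintX hintUX, hX]
      _ ≤ x + ∫ ω, Ubd d σ Δt N m (x - totInc d σ Δ s ω)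
            (nextPrice d σ Δ s ω) ∂(stdGaussianPi d) := by
          refine add_le_add_right (integral_mono hintUX hintUt fun ω => ?_) x
          exact ubd_anti σ Δt N hΔt m _ (addX_ge σ Δ s x a.2 a.1 ω)
      _ = x + Ubd d σ Δt N (m + 1) x s := rfl

lemma ubd_tendsto (hΔt : ∀ n, 0 < Δt n) :
    ∀ m (s : Fin d → ℝ), Tendsto (fun x => Ubd d σ Δt N m x s) atTop (nhds 0) := by
  intro m
  induction m with
  | zero =>
    intro s
    refine Tendsto.congr' ?_ (tendsto_const_nhds (x := (0:ℝ)))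
    filter_upwards [eventually_ge_atTop (0:ℝ)] with x hx
    show (0:ℝ) = |x| - x
    rw [abs_of_nonneg hx]; ring
  | succ m ih =>
    intro s
    set Δ := Δt (N - m) with hΔdef
    have hΔ : (0:ℝ) ≤ Δ := (hΔt _).le
    have hXm0 : Measurable fun ω : Fin d → ℝ => (0:ℝ) - totInc d σ Δ s ω :=
      measurable_const.sub (measurable_totInc_comp σ Δ measurable_const measurable_id)
    have hbound : Integrable (fun ω => Ubd d σ Δt N m ((0:ℝ) - totInc d σ Δ s ω)
        (nextPrice d σ Δ s ω)) (stdGaussianPi d) :=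
      integrable_master σ (sm_ubd σ Δt N m) (ubd_bound σ Δt N hΔt m) hXm0 0 Δ s
        (fun ω => abs_sub_totInc_le σ Δ s 0 ω)
    have key : Tendsto (fun x => ∫ ω, Ubd d σ Δt N m (x - totInc d σ Δ s ω)
        (nextPrice d σ Δ s ω) ∂(stdGaussianPi d)) atTop
        (nhds (∫ _ω, (0:ℝ) ∂(stdGaussianPi d))) := by
      refine tendsto_integral_filter_of_dominated_convergence
        (fun ω => Ubd d σ Δt N m ((0:ℝ) - totInc d σ Δ s ω) (nextPrice d σ Δ s ω))
        ?_ ?_ hbound ?_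
      · refine Filter.Eventually.of_forall fun x => ?_
        have hXm : Measurable fun ω : Fin d → ℝ => x - totInc d σ Δ s ω :=
          measurable_const.sub (measurable_totInc_comp σ Δ measurable_const measurable_id)
        exact ((sm_ubd σ Δt N m).comp_measurable
          (hXm.prodMk (measurable_nextPrice_comp σ Δ measurable_const
            measurable_id))).aestronglyMeasurable
      · filter_upwards [eventually_ge_atTop (0:ℝ)] with x hx
        refine Filter.Eventually.of_forall fun ω => ?_
        rw [Real.norm_eq_abs, abs_of_nonneg (ubd_nonneg σ Δt N m _ _)]
        exact ubd_anti σ Δt N hΔt m _ (by linarith [totInc_nonneg σ Δ s ω])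
      · refine Filter.Eventually.of_forall fun ω => ?_
        have h1 : Tendsto (fun x : ℝ => x - totInc d σ Δ s ω) atTop atTop :=
          tendsto_atTop_add_const_right atTop (-(totInc d σ Δ s ω))
            (by exact tendsto_id)
        have h2 := (ih (nextPrice d σ Δ s ω)).comp h1
        exact h2
    rw [integral_zero] at key
    exact key

end Main

/-- Asymptotic linearity of the value functions: for every `k ∈ {0,…,N}` and prices `s`,
`V_k(x, s) − x → 0` as `x → ∞`. -/
theorem statement_6
    (d : ℕ) (hd : 0 < d) (σ : Fin d → ℝ) (hσ : ∀ i, 0 < σ i)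
    (Δt : ℕ → ℝ) (hΔt : ∀ n, 0 < Δt n) (N k : ℕ) (hk : k ≤ N)
    (s : Fin d → ℝ) (hs : ∀ i, 0 < s i) :
    Tendsto (fun x => passportValue d σ Δt N (N - k) x s - x) atTop (nhds 0) := by
  refine tendsto_of_tendsto_of_tendsto_of_le_of_le (g := fun _ : ℝ => (0:ℝ))
    (h := fun x => Ubd d σ Δt N (N - k) x s) tendsto_const_nhds
    (ubd_tendsto σ Δt N hΔt (N - k) s) ?_ ?_
  · intro x
    exact sub_nonneg.2 (passport_lower σ Δt N hd hΔt (N - k) x s)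
  · intro x
    exact sub_le_iff_le_add'.2 (passport_upper σ Δt N hd hΔt (N - k) x s)
end
end
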